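/- arXiv:0808.1532 — 4 statements merged into one kernel-verified Lean document; each statement's English description precedes it below -/
import Mathlib

section
/- Z-measurement rule: let G be a simple graph on Fin n, i a vertex, and g := G − i the graph obtained by deleting vertex i and all its edges (its graph states live on the (n−1) qubits indexed by Fin n ∖ {i}). Then for every label string ℓ, |G_ℓ⟩ = 2^{−1/2} · ∑_{z∈{0,1}} (−1)^{z·ℓ_i} |z⟩_i ⊗ |g_{ℓ^{(z)}}⟩, where ℓ^{(z)} is the restriction of ℓ to Fin n ∖ {i} with ℓ_j replaced by ℓ_j ⊕ z for each j ∈ N_i, and the right-hand side is interpreted in H_n via the canonical identification of the qubit i factor with the remaining qubits. -/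
noncomputable section

open scoped ComplexConjugate

/-- The Hilbert space of qubits indexed by `V`, as functions from bit strings to `ℂ`. -/
abbrev QState (V : Type) : Type := (V → Fin 2) → ℂ

/-- The diagonal operator with diagonal entries `d`. -/
def diagOp {V : Type} (d : (V → Fin 2) → ℂ) : QState V →ₗ[ℂ] QState V where
  toFun f := fun x => d x * f x
  map_add' f g := by funext x; simp [mul_add]
  map_smul' c f := by funext x; simp [smul_eq_mul]; ring

/-- The Pauli `Z` operator on qubit `i`. -/
def Zop {V : Type} (i : V) : QState V →ₗ[ℂ] QState V :=
  diagOp fun x => (-1 : ℂ) ^ (x i : ℕ)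

/-- The Pauli `X` operator on qubit `i` (bit flip). -/
def Xop {V : Type} [DecidableEq V] (i : V) : QState V →ₗ[ℂ] QState V where
  toFun f := fun x => f (Function.update x i (x i + 1))
  map_add' f g := rfl
  map_smul' c f := rfl

/-- The phase gate `S` on qubit `i`, sending `|x⟩` to `(-i)^(x i) |x⟩`. -/
def Sop {V : Type} (i : V) : QState V →ₗ[ℂ] QState V :=
  diagOp fun x => (-Complex.I) ^ (x i : ℕ)

/-- The Pauli `Y` operator on qubit `i`, `Y = i·X·Z`. -/
def Yop {V : Type} [DecidableEq V] (i : V) : QState V →ₗ[ℂ] QState V :=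
  Complex.I • (Xop i ∘ₗ Zop i)

/-- `qVal G x` is the number of edges of `G` both of whose endpoints carry bit 1 in `x`. -/
def qVal {V : Type} (G : SimpleGraph V) (x : V → Fin 2) : ℕ :=
  Nat.card {e : Sym2 V // e ∈ G.edgeSet ∧ ∀ v ∈ e, x v = 1}

/-- The graph state `|G⟩`, with amplitudes `2^{-n/2} (-1)^{q_G(x)}`. -/
def graphState {V : Type} [Fintype V] (G : SimpleGraph V) : QState V :=
  fun x => (((Real.sqrt 2)⁻¹ ^ Fintype.card V : ℝ) : ℂ) * (-1 : ℂ) ^ qVal G x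

/-- The labeled/encoded graph state `|𝒢_ℓ⟩ = (∏_i Z_i^{ℓ_i}) (∏_{j ∈ Vsq} S_j) |G⟩`,
with square-vertex set `Vsq`. -/
def encSq {V : Type} [Fintype V] (G : SimpleGraph V) (Vsq : Set V) (ℓ : V → Fin 2) : QState V :=
  fun x => (-1 : ℂ) ^ Nat.card {i : V // ℓ i = 1 ∧ x i = 1}
    * (-Complex.I) ^ Nat.card {j : V // j ∈ Vsq ∧ x j = 1}
    * graphState G x

/-- The encoded graph state `|G_ℓ⟩` (no square vertices). -/
def encG {V : Type} [Fintype V] (G : SimpleGraph V) (ℓ : V → Fin 2) : QState V :=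
  encSq G ∅ ℓ

open Classical in
/-- The stabilizer operator of vertex `i`: `X_i ∏_{j ∈ N_i} Z_j` for circular vertices,
`Y_i ∏_{j ∈ N_i} Z_j` for square vertices (`i ∈ Vsq`). -/
def Kop {V : Type} [DecidableEq V] (G : SimpleGraph V) (Vsq : Set V) (i : V) :
    QState V →ₗ[ℂ] QState V :=
  (if i ∈ Vsq then Yop i else Xop i) ∘ₗ
    diagOp fun x => (-1 : ℂ) ^ Nat.card {j : V // G.Adj i j ∧ x j = 1}

/-- Merge a bit string on `P` with a bit string on the complement of `P`. -/
def mergeBits {V : Type} [DecidableEq V] (P : Finset V) (a : {i // i ∈ P} → Fin 2)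
    (c : {i // i ∉ P} → Fin 2) : V → Fin 2 :=
  fun i => if h : i ∈ P then a ⟨i, h⟩ else c ⟨i, h⟩

/-- The reduced density matrix of the pure state `ψ` on the qubits in `P`:
`(a, b) ↦ ∑_c ⟨a⊔c|ψ⟩⟨ψ|b⊔c⟩`. -/
def red {V : Type} [Fintype V] [DecidableEq V] (P : Finset V) (ψ : QState V) :
    ({i // i ∈ P} → Fin 2) → ({i // i ∈ P} → Fin 2) → ℂ :=
  fun a b => ∑ c : {i // i ∉ P} → Fin 2, ψ (mergeBits P a c) * conj (ψ (mergeBits P b c))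

/-- The computational basis vector `|y⟩`. -/
def basisVec {V : Type} [Fintype V] [DecidableEq V] (y : V → Fin 2) : QState V :=
  fun x => if x = y then 1 else 0

/-- The matrix entry `⟨x|A|y⟩` of an operator. -/
def opEntry {V : Type} [Fintype V] [DecidableEq V] (A : QState V →ₗ[ℂ] QState V)
    (x y : V → Fin 2) : ℂ := A (basisVec y) x

/-- `A` acts trivially outside `P`: it equals `M ⊗ Id` for some operator `M` on the
qubits in `P`. -/
def trivialOutside {V : Type} [Fintype V] [DecidableEq V] (P : Finset V)
    (A : QState V →ₗ[ℂ] QState V) : Prop :=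
  ∃ M : ({i // i ∈ P} → Fin 2) → ({i // i ∈ P} → Fin 2) → ℂ,
    ∀ a b c c', opEntry A (mergeBits P a c) (mergeBits P b c') = if c = c' then M a b else 0

/-- The product `∏_{i ∈ T} K_i` of (commuting) operators, taken in sorted order. -/
def prodOps {V : Type} [LinearOrder V] (T : Finset V)
    (K : V → QState V →ₗ[ℂ] QState V) : QState V →ₗ[ℂ] QState V :=
  (T.sort (· ≤ ·)).foldr (fun i acc => K i ∘ₗ acc) LinearMap.id

/-!
Deleting vertex `i` splits the edges counted by `q_G(x)` into the edges of `G − i` and the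
edges `{i, j}` with `x_j = 1`, which count only when `x_i = 1`. The sign of the latter is the
phase of `∏_{j ∈ N_i} Z_j^{x_i}`, i.e. it shifts the labels of the neighbours by `x_i`.
The label phase then factors into `(-1)^{x_i ℓ_i}` on qubit `i` times the phase on the other
qubits, and `2^{-n/2} = 2^{-1/2} · 2^{-(n-1)/2}`.
-/

/-- The eigenvalue `⟨x| ∏_j Z_j^{ℓ_j} |x⟩ = (-1)^{∑_j ℓ_j x_j}`. -/
def zPhase {V : Type} (ℓ x : V → Fin 2) : ℂ :=
  (-1) ^ Nat.card {j : V // ℓ j = 1 ∧ x j = 1}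

section

variable {V : Type}

theorem encG_apply [Fintype V] (G : SimpleGraph V) (ℓ x : V → Fin 2) :
    encG G ℓ x = zPhase ℓ x * graphState G x := by
  simp [encG, encSq, zPhase]

theorem pow_nat_card_eq_prod [Fintype V] {M : Type*} [CommMonoid M] (P : V → Prop)
    [DecidablePred P] (c : M) : c ^ Nat.card {j // P j} = ∏ j, if P j then c else 1 := by
  rw [Nat.card_eq_fintype_card, Fintype.card_subtype, ← Finset.prod_const, Finset.prod_filter]

theorem zPhase_eq_prod [Fintype V] (ℓ x : V → Fin 2) :
    zPhase ℓ x = ∏ j, if ℓ j = 1 ∧ x j = 1 then -1 else 1 :=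
  pow_nat_card_eq_prod _ _

theorem zPhase_add [Fintype V] (ℓ ℓ' x : V → Fin 2) :
    zPhase (ℓ + ℓ') x = zPhase ℓ x * zPhase ℓ' x := by
  simp only [zPhase_eq_prod, ← Finset.prod_mul_distrib, Pi.add_apply]
  have sign_add (a b c : Fin 2) : (if a + b = 1 ∧ c = 1 then (-1 : ℂ) else 1) =
      (if a = 1 ∧ c = 1 then -1 else 1) * if b = 1 ∧ c = 1 then -1 else 1 := by
    fin_cases a <;> fin_cases b <;> fin_cases c <;> norm_num
  exact Finset.prod_congr rfl fun j _ => sign_add _ _ _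

theorem zPhase_eq_mul_zPhase_ne [Fintype V] [DecidableEq V] (ℓ x : V → Fin 2) (i : V) :
    zPhase ℓ x = (-1) ^ ((x i : ℕ) * (ℓ i : ℕ)) *
      zPhase (fun j : {j | j ≠ i} => ℓ j) (fun j => x j) := by
  rw [zPhase_eq_prod, zPhase_eq_prod, Fintype.prod_eq_mul_prod_subtype_ne _ i]
  have sign_mul (a b : Fin 2) :
      (if a = 1 ∧ b = 1 then (-1 : ℂ) else 1) = (-1) ^ ((b : ℕ) * (a : ℕ)) := by
    fin_cases a <;> fin_cases b <;> norm_num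
  rw [sign_mul]
  rfl

theorem qVal_induce_eq_ncard (G : SimpleGraph V) (s : Set V) (x : V → Fin 2) :
    qVal (G.induce s) (fun j => x j) =
      ({e | e ∈ G.edgeSet ∧ ∀ v ∈ e, x v = 1} ∩ {e | ∀ v ∈ e, v ∈ s}).ncard := by
  refine (Set.ncard_image_of_injective _ (Sym2.map.injective Subtype.val_injective)).symm.trans
    (congrArg Set.ncard ?_)
  ext e
  constructor
  · rintro ⟨e, ⟨he, hx⟩, rfl⟩
    induction e using Sym2.ind with
    | _ a b => simp_all
  · induction e using Sym2.ind with
    | _ a b =>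
      rintro ⟨⟨hab, hx⟩, hs⟩
      refine ⟨s(⟨a, hs a (Sym2.mem_mk_left a b)⟩, ⟨b, hs b (Sym2.mem_mk_right a b)⟩),
        ⟨hab, ?_⟩, rfl⟩
      simpa using hx

theorem ncard_edges_of_ones_incident (G : SimpleGraph V) (x : V → Fin 2) (i : V) :
    ({e | e ∈ G.edgeSet ∧ ∀ v ∈ e, x v = 1} \ {e | ∀ v ∈ e, v ≠ i}).ncard =
      Nat.card {j // G.Adj i j ∧ x i = 1 ∧ x j = 1} := by
  refine (congrArg Set.ncard ?_).trans
    (Set.ncard_image_of_injective (f := fun j => s(i, j)) {j | G.Adj i j ∧ x i = 1 ∧ x j = 1}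
      fun _ _ => Sym2.congr_right.mp)
  ext e
  constructor
  · induction e using Sym2.ind with
    | _ a b =>
      rintro ⟨⟨hab, hx⟩, hi⟩
      have hab_i : a = i ∨ b = i := by
        by_contra! h
        exact hi fun v hv => by rcases Sym2.mem_iff.mp hv with rfl | rfl <;> tauto
      rcases hab_i with rfl | rfl
      · exact ⟨b, ⟨hab, hx a (Sym2.mem_mk_left a b), hx b (Sym2.mem_mk_right a b)⟩, rfl⟩
      · exact ⟨a, ⟨hab.symm, hx b (Sym2.mem_mk_right a b), hx a (Sym2.mem_mk_left a b)⟩,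
          Sym2.eq_swap⟩
  · rintro ⟨j, ⟨hij, hi, hj⟩, rfl⟩
    refine ⟨⟨hij, fun v hv => ?_⟩, fun h => h i (Sym2.mem_mk_left i j) rfl⟩
    rcases Sym2.mem_iff.mp hv with rfl | rfl <;> assumption

theorem qVal_eq_qVal_induce_ne_add [Finite V] (G : SimpleGraph V) (x : V → Fin 2) (i : V) :
    qVal G x = qVal (G.induce {j | j ≠ i}) (fun j => x j) +
      Nat.card {j // G.Adj i j ∧ x i = 1 ∧ x j = 1} := by
  rw [qVal_induce_eq_ncard, ← ncard_edges_of_ones_incident]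
  exact (Set.ncard_inter_add_ncard_sdiff_eq_ncard _ _).symm

theorem card_setOf_ne_add_one [Fintype V] [DecidableEq V] (i : V) :
    Fintype.card {j | j ≠ i} + 1 = Fintype.card V := by
  have := Fintype.card_pos_iff.mpr ⟨i⟩
  rw [Set.card_ne_eq]
  omega

theorem graphState_eq_mul_graphState_induce_ne [Fintype V] [DecidableEq V] (G : SimpleGraph V)
    [DecidableRel G.Adj] (i : V) (x : V → Fin 2) :
    graphState G x = ((Real.sqrt 2)⁻¹ : ℝ) * zPhase (fun j => if G.Adj i j then x i else 0) x *
      graphState (G.induce {j | j ≠ i}) (fun j => x j) := by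
  have hphase : zPhase (fun j => if G.Adj i j then x i else 0) x =
      (-1) ^ Nat.card {j // G.Adj i j ∧ x i = 1 ∧ x j = 1} := by
    refine congrArg _ (Nat.card_congr (Equiv.subtypeEquivRight fun j => ?_))
    dsimp only
    split_ifs with h <;> simp [h]
  rw [graphState, graphState, hphase, qVal_eq_qVal_induce_ne_add G x i, ← card_setOf_ne_add_one i]
  push_cast
  ring

end

/-- Stated pointwise at each basis point `x`, where only the term `z = x i` of the sum survives. -/
theorem z_measurement_rule (n : ℕ) (G : SimpleGraph (Fin n)) [DecidableRel G.Adj]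
    (i : Fin n) (ℓ : Fin n → Fin 2) (x : Fin n → Fin 2) :
    encG G ℓ x =
      (((Real.sqrt 2)⁻¹ : ℝ) : ℂ) * (-1 : ℂ) ^ ((x i : ℕ) * (ℓ i : ℕ)) *
        encG (G.induce {j | j ≠ i})
          (fun j => if G.Adj i j.1 then ℓ j.1 + x i else ℓ j.1)
          (fun j => x j.1) := by
  have hlabels : ℓ + (fun j => if G.Adj i j then x i else 0) =
      fun j => if G.Adj i j then ℓ j + x i else ℓ j := by
    funext j
    by_cases h : G.Adj i j <;> simp [h]
  have hphase : zPhase ℓ x * zPhase (fun j => if G.Adj i j then x i else 0) x =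
      (-1) ^ ((x i : ℕ) * (ℓ i : ℕ)) *
        zPhase (fun j : {j | j ≠ i} => if G.Adj i j then ℓ j + x i else ℓ j)
          (fun j => x j) := by
    rw [← zPhase_add, hlabels, zPhase_eq_mul_zPhase_ne _ x i, if_neg G.irrefl]
  rw [encG_apply, encG_apply, graphState_eq_mul_graphState_induce_ne G i x]
  linear_combination (((Real.sqrt 2)⁻¹ : ℝ) : ℂ) *
    graphState (G.induce {j | j ≠ i}) (fun j => x j) * hphase

end
end

section
/- Y-measurement rule (conjugate graph): let G be a simple graph on Fin n and i a vertex. Let τ_i(G) be the local complement of G at i (adjacency between any two distinct vertices of N_i is toggled, all other adjacencies unchanged), let g' := τ_i(G) − i (vertex i and its edges deleted), and consider the encoded graph states |g'_ℓ⟩ of g' with square-vertex set N_i, on the qubits Fin n ∖ {i}. Let |0'⟩ := (|0⟩ − i|1⟩)/√2 and |1'⟩ := (|0⟩ + i|1⟩)/√2 be the eigenvectors of the one-qubit Pauli Y. Then there exist complex numbers c_0, c_1 of modulus 1 such that, denoting by ⟨y'|_i the partial inner product against |y'⟩ on qubit i, one has ⟨0'|_i |G⟩ = (c_0/√2)·|g'_{0}⟩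 and ⟨1'|_i |G⟩ = (c_1/√2)·|g'_{𝟙_{N_i}}⟩, where 0 is the all-zero label and 𝟙_{N_i} is the label that is 1 exactly on N_i. -/
noncomputable section

open scoped ComplexConjugate

/-- The local complement of `G` at `i`: adjacency is toggled between distinct
neighbours of `i` and unchanged otherwise. -/
def localComp {V : Type} (G : SimpleGraph V) (i : V) : SimpleGraph V where
  Adj a b := Xor' (G.Adj a b) (G.Adj i a ∧ G.Adj i b ∧ a ≠ b)
  symm := by
    constructor
    intro a b h
    unfold Xor' at h ⊢
    rcases h with ⟨h1, h2⟩ | ⟨h1, h2⟩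
    · exact Or.inl ⟨h1.symm, fun hc => h2 ⟨hc.2.1, hc.1, hc.2.2.symm⟩⟩
    · exact Or.inr ⟨⟨h1.2.1, h1.1, h1.2.2.symm⟩, fun hc => h2 hc.symm⟩
  loopless := by
    constructor
    intro a h
    rcases h with ⟨h1, _⟩ | ⟨⟨_, _, h3⟩, _⟩
    · exact G.loopless.irrefl a h1
    · exact h3 rfl

/-- Components of the Pauli `Y` eigenvectors `|0'⟩ = (|0⟩ − i|1⟩)/√2` and
`|1'⟩ = (|0⟩ + i|1⟩)/√2`. -/
def ketY (s z : Fin 2) : ℂ :=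
  (((Real.sqrt 2)⁻¹ : ℝ) : ℂ) * (if z = 0 then 1 else if s = 0 then -Complex.I else Complex.I)

/-! Write `x` for `r` extended by `0` at `i`, and `m` for the number of neighbours of `i` on
which `r` is `1`. Raising `x i` to `1` adds exactly those `m` edges, so the partial inner
product against the `Y` eigenvector is `2^{-(n+1)/2} (-1)^{q_G(x)} (1 + ε (-1)^m)` with
`ε = ±i`. Local complementation at `i` toggles the `C(m, 2)` pairs of neighbours inside the
support, so `q_{g'}(r) ≡ q_G(x) + C(m, 2) (mod 2)`, and for `ε² = -1` one has
`1 + ε (-1)^m = (1 + ε) (-ε)^m (-1)^{C(m, 2)}`, where `(-ε)^m` is exactly the phase that the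
`S` gates on `N_i` and the `Z`-label contribute to `|g'_ℓ⟩`. -/

open Complex

variable {V : Type}

lemma Set.ncard_symmDiff_add_two_mul_ncard_inter {α : Type*} {A B : Set α} (hA : A.Finite)
    (hB : B.Finite) : (symmDiff A B).ncard + 2 * (A ∩ B).ncard = A.ncard + B.ncard := by
  have hAB := Set.ncard_inter_add_ncard_sdiff_eq_ncard A B hA
  have hBA := Set.ncard_inter_add_ncard_sdiff_eq_ncard B A hB
  rw [Set.symmDiff_def, Set.ncard_union_eq disjoint_sdiff_sdiff hA.sdiff hB.sdiff,
    Set.inter_comm B A] at *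
  omega

lemma Sym2.range_map_subtypeVal (p : V → Prop) :
    Set.range (Sym2.map (Subtype.val : {v // p v} → V)) = {e | ∀ v ∈ e, p v} := by
  ext e
  constructor
  · rintro ⟨e, rfl⟩ v hv
    obtain ⟨w, -, rfl⟩ := Sym2.mem_map.mp hv
    exact w.2
  · exact fun h => ⟨e.attachWith h, Sym2.attachWith_map_subtypeVal h⟩

lemma Sym2.ncard_setOf_forall_mem_not_isDiag (p : V → Prop) :
    {e : Sym2 V | (∀ v ∈ e, p v) ∧ ¬e.IsDiag}.ncard = (Nat.card {v // p v}).choose 2 := by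
  have hpre : (Sym2.diagSet : Set (Sym2 {v // p v}))ᶜ
      = Sym2.map Subtype.val ⁻¹' {e | ¬e.IsDiag} := by
    ext e
    simp [Sym2.isDiag_map Subtype.val_injective]
  have himage : {e : Sym2 V | (∀ v ∈ e, p v) ∧ ¬e.IsDiag}
      = Sym2.map Subtype.val '' (Sym2.diagSet : Set (Sym2 {v // p v}))ᶜ := by
    rw [hpre, Set.image_preimage_eq_range_inter, Sym2.range_map_subtypeVal]
    rfl
  rw [himage, Set.ncard_image_of_injective _ (Sym2.map.injective Subtype.val_injective),
    Sym2.ncard_diagSet_compl]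

lemma qVal_eq_ncard (G : SimpleGraph V) (x : V → Fin 2) :
    qVal G x = (G.edgeSet ∩ {e | ∀ v ∈ e, x v = 1}).ncard :=
  Nat.card_coe_set_eq _

lemma qVal_induce {s : Set V} (H : SimpleGraph V) {x : V → Fin 2} (hx : ∀ v ∉ s, x v = 0) :
    qVal (H.induce s) (fun v => x v) = qVal H x := by
  have hrange : H.edgeSet ∩ {e | ∀ v ∈ e, x v = 1}
      ⊆ Set.range (Sym2.map (Subtype.val : s → V)) := by
    rw [Sym2.range_map_subtypeVal]
    intro e he v hv
    by_contra hvs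
    simpa [hx v hvs] using he.2 v hv
  rw [qVal_eq_ncard, qVal_eq_ncard, ← Set.image_preimage_eq_of_subset hrange,
    Set.ncard_image_of_injective _ (Sym2.map.injective Subtype.val_injective)]
  congr 1
  ext e
  induction e using Sym2.ind
  simp

lemma qVal_update_one [Finite V] [DecidableEq V] (G : SimpleGraph V) {i : V} {x : V → Fin 2}
    (hx : x i = 0) :
    qVal G (Function.update x i 1) = qVal G x + Nat.card {j // G.Adj i j ∧ x j = 1} := by
  have hsplit : G.edgeSet ∩ {e | ∀ v ∈ e, Function.update x i 1 v = 1}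
      = (G.edgeSet ∩ {e | ∀ v ∈ e, x v = 1})
        ∪ (fun j => s(i, j)) '' {j | G.Adj i j ∧ x j = 1} := by
    ext e
    induction e using Sym2.ind
    simp only [Set.mem_union, Set.mem_inter_iff, SimpleGraph.mem_edgeSet, Set.mem_ofPred_eq,
      Sym2.forall_mem_pair, Set.mem_image, Sym2.eq_iff]
    grind [SimpleGraph.adj_symm, SimpleGraph.irrefl, Function.update_self,
      Function.update_of_ne]
  have hdisj : Disjoint (G.edgeSet ∩ {e | ∀ v ∈ e, x v = 1})
      ((fun j => s(i, j)) '' {j | G.Adj i j ∧ x j = 1}) := by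
    rw [Set.disjoint_left]
    rintro e ⟨-, hall⟩ ⟨j, -, rfl⟩
    simpa [hx] using hall i (Sym2.mem_mk_left i j)
  rw [qVal_eq_ncard, qVal_eq_ncard, hsplit, Set.ncard_union_eq hdisj,
    Set.ncard_image_of_injective _ (fun j j' h => Sym2.congr_right.mp h)]
  rfl

lemma localComp_adj (G : SimpleGraph V) (i a b : V) :
    (localComp G i).Adj a b ↔ Xor (G.Adj a b) (G.Adj i a ∧ G.Adj i b ∧ a ≠ b) := Iff.rfl

lemma edgeSet_localComp (G : SimpleGraph V) (i : V) :
    (localComp G i).edgeSet = symmDiff G.edgeSet {e | (∀ v ∈ e, G.Adj i v) ∧ ¬e.IsDiag} := by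
  ext e
  induction e using Sym2.ind
  simp only [SimpleGraph.mem_edgeSet, localComp_adj, Set.mem_symmDiff, Set.mem_ofPred_eq,
    xor_def, Sym2.forall_mem_pair, Sym2.mk_isDiag_iff]
  tauto

lemma qVal_localComp_modEq [Finite V] (G : SimpleGraph V) (i : V) (x : V → Fin 2) :
    qVal (localComp G i) x
      ≡ qVal G x + (Nat.card {j // G.Adj i j ∧ x j = 1}).choose 2 [MOD 2] := by
  have hpairs : {e : Sym2 V | (∀ v ∈ e, G.Adj i v) ∧ ¬e.IsDiag} ∩ {e | ∀ v ∈ e, x v = 1}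
      = {e | (∀ v ∈ e, G.Adj i v ∧ x v = 1) ∧ ¬e.IsDiag} := by
    ext e
    simp only [Set.mem_inter_iff, Set.mem_ofPred_eq, forall_and]
    tauto
  have hq : qVal (localComp G i) x = (symmDiff (G.edgeSet ∩ {e | ∀ v ∈ e, x v = 1})
      {e | (∀ v ∈ e, G.Adj i v ∧ x v = 1) ∧ ¬e.IsDiag}).ncard := by
    rw [qVal_eq_ncard, edgeSet_localComp, Set.inter_symmDiff_distrib_right, hpairs]
  have hcount := Set.ncard_symmDiff_add_two_mul_ncard_inter
    (Set.toFinite (G.edgeSet ∩ {e | ∀ v ∈ e, x v = 1}))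
    (Set.toFinite {e : Sym2 V | (∀ v ∈ e, G.Adj i v ∧ x v = 1) ∧ ¬e.IsDiag})
  rw [← hq, ← qVal_eq_ncard, Sym2.ncard_setOf_forall_mem_not_isDiag] at hcount
  unfold Nat.ModEq
  omega

lemma one_add_mul_neg_one_pow {R : Type*} [CommRing R] {ε : R} (hε : ε ^ 2 = -1)
    (m : ℕ) :
    1 + ε * (-1) ^ m = (1 + ε) * (-ε) ^ m * (-1) ^ m.choose 2 := by
  induction m with
  | zero => simp
  | succ k ih =>
    have hk : ((-1 : R) ^ k) ^ 2 = 1 := by rw [← pow_mul, pow_mul', neg_one_sq, one_pow]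
    rw [Nat.choose_succ_succ', Nat.choose_one_right, pow_add, pow_succ, pow_succ]
    linear_combination (-ε * (-1) ^ k) * ih + (-1) ^ k * (-1) ^ k * hε - hk

section InsertBit

variable [DecidableEq V] (i : V) (r : ↥{j : V | j ≠ i} → Fin 2)

def insertBit (z : Fin 2) : V → Fin 2 :=
  fun k => if h : k = i then z else r ⟨k, h⟩

@[simp]
lemma insertBit_self (z : Fin 2) : insertBit i r z i = z := by
  simp [insertBit]

lemma insertBit_of_ne (z : Fin 2) (j : ↥{j : V | j ≠ i}) : insertBit i r z j = r j :=
  dif_neg j.2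

lemma insertBit_one : insertBit i r 1 = Function.update (insertBit i r 0) i 1 := by
  funext k
  by_cases h : k = i
  · subst h; simp
  · simp [insertBit, h]

lemma card_adj_insertBit (G : SimpleGraph V) (z : Fin 2) :
    Nat.card {j // G.Adj i j ∧ insertBit i r z j = 1}
      = Nat.card {j : ↥{j : V | j ≠ i} // G.Adj i j ∧ r j = 1} :=
  Nat.card_congr
    { toFun := fun j => ⟨⟨j, (G.ne_of_adj j.2.1).symm⟩, j.2.1,
        by rw [← insertBit_of_ne i r z]; exact j.2.2⟩
      invFun := fun j => ⟨j.1, j.2.1, by rw [insertBit_of_ne]; exact j.2.2⟩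
      left_inv := fun _ => rfl
      right_inv := fun _ => rfl }

lemma qVal_induce_insertBit_zero (H : SimpleGraph V) :
    qVal (H.induce {j | j ≠ i}) r = qVal H (insertBit i r 0) := by
  have hzero : ∀ v ∉ {j : V | j ≠ i}, insertBit i r 0 v = 0 := by
    intro v hv
    rw [Set.notMem_ofPred_iff, not_not] at hv
    rw [hv, insertBit_self]
  rw [← qVal_induce H hzero]
  exact congrArg _ (funext (insertBit_of_ne i r 0)).symm

lemma neg_one_pow_qVal_induce_localComp [Fintype V] (G : SimpleGraph V) :
    (-1 : ℂ) ^ qVal ((localComp G i).induce {j | j ≠ i}) r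
      = (-1) ^ qVal G (insertBit i r 0)
        * (-1) ^ (Nat.card {j : ↥{j : V | j ≠ i} // G.Adj i j ∧ r j = 1}).choose 2 := by
  have hmod := qVal_localComp_modEq G i (insertBit i r 0)
  rw [card_adj_insertBit, ← qVal_induce_insertBit_zero] at hmod
  rw [← pow_add]
  exact neg_one_pow_congr (by rw [Nat.even_iff, Nat.even_iff, show _ % 2 = _ % 2 from hmod])

end InsertBit

def yPhase (s : Fin 2) : ℂ := (-1) ^ (s : ℕ) * I

lemma yPhase_sq (s : Fin 2) : yPhase s ^ 2 = -1 := by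
  rw [yPhase, mul_pow, ← pow_mul, pow_mul', neg_one_sq, one_pow, one_mul, I_sq]

lemma conj_ketY_zero (s : Fin 2) : conj (ketY s 0) = (((Real.sqrt 2)⁻¹ : ℝ) : ℂ) := by
  simp [ketY]

lemma conj_ketY_one (s : Fin 2) :
    conj (ketY s 1) = (((Real.sqrt 2)⁻¹ : ℝ) : ℂ) * yPhase s := by
  fin_cases s <;> simp [ketY, yPhase]

lemma norm_one_add_yPhase (s : Fin 2) : ‖1 + yPhase s‖ = Real.sqrt 2 := by
  fin_cases s <;> norm_num [yPhase, norm_def, normSq_apply]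

lemma norm_one_add_yPhase_mul (s : Fin 2) :
    ‖(1 + yPhase s) * (((Real.sqrt 2)⁻¹ : ℝ) : ℂ)‖ = 1 := by
  rw [norm_mul, norm_one_add_yPhase, norm_real, Real.norm_of_nonneg (by positivity),
    mul_inv_cancel₀ (by positivity)]

lemma neg_one_pow_mul_mul_neg_I_pow (s : Fin 2) (m : ℕ) :
    (-1 : ℂ) ^ ((s : ℕ) * m) * (-I) ^ m = (-yPhase s) ^ m := by
  rw [pow_mul, ← mul_pow, yPhase, neg_mul_eq_mul_neg]

lemma card_ite_eq_one_and (G : SimpleGraph V) [DecidableRel G.Adj] {s : Set V} (i : V) (t : Fin 2)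
    (r : s → Fin 2) :
    Nat.card {j : s // (if G.Adj i j then t else 0) = 1 ∧ r j = 1}
      = (t : ℕ) * Nat.card {j : s // G.Adj i j ∧ r j = 1} := by
  fin_cases t <;> simp

lemma graphState_apply [Fintype V] (G : SimpleGraph V) (x : V → Fin 2) :
    graphState G x = (((Real.sqrt 2)⁻¹ : ℝ) : ℂ) ^ Fintype.card V * (-1) ^ qVal G x := by
  simp [graphState]

theorem sum_conj_ketY_mul_graphState [Fintype V] [DecidableEq V] (G : SimpleGraph V)
    [DecidableRel G.Adj] (i : V) (s : Fin 2) (r : ↥{j : V | j ≠ i} → Fin 2) :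
    ∑ z : Fin 2, conj (ketY s z) * graphState G (insertBit i r z) =
      (1 + yPhase s) * (((Real.sqrt 2)⁻¹ : ℝ) : ℂ) * (((Real.sqrt 2)⁻¹ : ℝ) : ℂ) *
        encSq ((localComp G i).induce {j | j ≠ i}) {j | G.Adj i j.1}
          (fun j => if G.Adj i j.1 then s else 0) r := by
  set m := Nat.card {j : ↥{j : V | j ≠ i} // G.Adj i j ∧ r j = 1}
  have hq₁ : qVal G (insertBit i r 1) = qVal G (insertBit i r 0) + m := by
    rw [insertBit_one, qVal_update_one G (insertBit_self i r 0), card_adj_insertBit]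
  have hsquare : Nat.card {j : ↥{j : V | j ≠ i} //
      j ∈ {j : ↥{j : V | j ≠ i} | G.Adj i j.1} ∧ r j = 1} = m := rfl
  have hcard : Fintype.card V = Fintype.card ↥{j : V | j ≠ i} + 1 := by
    have := Fintype.card_pos_iff.mpr ⟨i⟩
    rw [Set.card_ne_eq]
    omega
  rw [Fin.sum_univ_two, conj_ketY_zero, conj_ketY_one, graphState_apply, graphState_apply, encSq,
    graphState_apply, hq₁, neg_one_pow_qVal_induce_localComp, card_ite_eq_one_and, hsquare,
    neg_one_pow_mul_mul_neg_I_pow, hcard]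
  linear_combination (((Real.sqrt 2)⁻¹ : ℝ) : ℂ) ^ 2
    * (((Real.sqrt 2)⁻¹ : ℝ) : ℂ) ^ Fintype.card ↥{j : V | j ≠ i}
    * (-1) ^ qVal G (insertBit i r 0) * one_add_mul_neg_one_pow (yPhase_sq s) m

/-- Y-measurement rule / conjugate graph: pairing the graph state `|G⟩`
with the Pauli-`Y` eigenvectors `|0'⟩, |1'⟩` on qubit `i` yields, up to unimodular
phases `c₀, c₁`, the states `(1/√2)|g'_0⟩` and `(1/√2)|g'_{𝟙_{N_i}}⟩`, where
`g' = τ_i(G) − i` with square-vertex set `N_i`. -/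
theorem y_measurement_rule (n : ℕ) (G : SimpleGraph (Fin n)) [DecidableRel G.Adj]
    (i : Fin n) :
    ∃ c₀ c₁ : ℂ, ‖c₀‖ = 1 ∧ ‖c₁‖ = 1 ∧
      (∀ r : ↥{j : Fin n | j ≠ i} → Fin 2,
        (∑ z : Fin 2, conj (ketY 0 z) *
            graphState G (fun k => if h : k = i then z else r ⟨k, h⟩)) =
          c₀ * (((Real.sqrt 2)⁻¹ : ℝ) : ℂ) *
            encSq ((localComp G i).induce {j | j ≠ i}) {j | G.Adj i j.1}
              (fun _ => 0) r) ∧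
      (∀ r : ↥{j : Fin n | j ≠ i} → Fin 2,
        (∑ z : Fin 2, conj (ketY 1 z) *
            graphState G (fun k => if h : k = i then z else r ⟨k, h⟩)) =
          c₁ * (((Real.sqrt 2)⁻¹ : ℝ) : ℂ) *
            encSq ((localComp G i).induce {j | j ≠ i}) {j | G.Adj i j.1}
              (fun j => if G.Adj i j.1 then 1 else 0) r) := by
  refine ⟨_, _, norm_one_add_yPhase_mul 0, norm_one_add_yPhase_mul 1, fun r => ?_, fun r => ?_⟩
  · have h := sum_conj_ketY_mul_graphState G i 0 r
    simp only [ite_self] at h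
    exact h
  · exact sum_conj_ketY_mul_graphState G i 1 r
end
end

section
/- (3,4) threshold scheme on the 4-cycle (Proposition 3): let C4 be the cycle graph on vertices {1,2,3,4}, and for S ∈ {0,1} let ℓ^S := (S,S,S,S). Then (a) for every subset V' ⊆ {1,2,3,4} with |V'| ≤ 2, the reduced states coincide: Tr_{V∖V'}(|G_{ℓ^0}⟩⟨G_{ℓ^0}|) = Tr_{V∖V'}(|G_{ℓ^1}⟩⟨G_{ℓ^1}|); and (b) for every subset V' with |V'| = 3 there exists j ∈ V' with N_j ⊆ V', and the stabilizer K_j = X_j·∏_{k∈N_j}Z_k acts trivially outside V' and satisfies K_j |G_{ℓ^S}⟩ = (−1)^S |G_{ℓ^S}⟩; hence any three players can determine S while any two players obtain no information about S. -/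
noncomputable section

open scoped ComplexConjugate

/-- The cycle graph on `Fin n` (consecutive vertices mod `n` are adjacent). -/
def cycG (n : ℕ) [NeZero n] : SimpleGraph (Fin n) where
  Adj a b := a ≠ b ∧ (b = a + 1 ∨ a = b + 1)
  symm := by refine ⟨?_⟩; intro a b h; exact ⟨h.1.symm, h.2.symm⟩
  loopless := by refine ⟨?_⟩; intro a h; exact h.1 rfl


/-! Flipping bit `j` multiplies the amplitude `⟨x|G_ℓ⟩` by `(-1)^(ℓ_j + #{k ∈ N_j | x_k = 1})`:
the label count changes by `ℓ_j`, and `q_G` changes parity once per edge `{j, k}` with `x_k = 1`.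
Read as an operator identity this is `K_j |G_ℓ⟩ = (-1)^ℓ_j |G_ℓ⟩`, which for `ℓ = (S,S,S,S)` is
part (b); `K_j` involves only `j` and `N_j`, so it acts trivially outside any set containing them.

For part (a), `|G_ℓ⟩ = Z^ℓ |G⟩` and the factors `Z_k` with `k ∉ P` cancel in the partial trace,
so `⟨a|ρ_1|b⟩ = (-1)^(|a|+|b|) ⟨a|ρ_0|b⟩`. If `|a| + |b|` is odd and `|P| ≤ 2`, some `i ∉ P`
has an odd number of ones of `a` and `b` on its neighbours in `P`. Reindexing the trace by `X_i`
then shows that `⟨a|ρ_0|b⟩` equals its own negative. -/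

section Parity

variable {α : Type*} [Fintype α]

open Classical in
theorem pow_natCard_subtype {M : Type*} [CommMonoid M] (r : M) (p : α → Prop) :
    r ^ Nat.card {a // p a} = ∏ a, if p a then r else 1 := by
  rw [Nat.card_eq_fintype_card, Fintype.card_subtype, Finset.prod_ite, Finset.prod_const_one,
    mul_one, Finset.prod_const]

theorem pow_natCard_subtype_mul_pow_natCard_subtype {M : Type*} [CommMonoid M] (r : M)
    (s p : α → Prop) :
    r ^ Nat.card {a : {a // s a} // p a} * r ^ Nat.card {a : {a // ¬s a} // p a} =
      r ^ Nat.card {a // p a} := by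
  classical
  simp only [pow_natCard_subtype]
  exact Fintype.prod_subtype_mul_prod_subtype s fun a => if p a then r else 1

theorem neg_one_pow_natCard_eq_xor_mul {R : Type*} [CommRing R] (p q : α → Prop) :
    (-1 : R) ^ Nat.card {a // p a} =
      (-1) ^ Nat.card {a // Xor (p a) (q a)} * (-1) ^ Nat.card {a // q a} := by
  classical
  simp only [pow_natCard_subtype, ← Finset.prod_mul_distrib]
  refine Finset.prod_congr rfl fun a _ => ?_
  by_cases hp : p a <;> by_cases hq : q a <;> simp [hp, hq]

end Parity

section Bits

variable {V : Type} [DecidableEq V]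

def flipBit (j : V) (x : V → Fin 2) : V → Fin 2 := Function.update x j (x j + 1)

theorem flipBit_of_ne {i j : V} (h : i ≠ j) (x : V → Fin 2) : flipBit j x i = x i :=
  Function.update_of_ne h _ _

theorem xor_flipBit_self_eq_one (j : V) (x : V → Fin 2) :
    Xor (flipBit j x j = 1) (x j = 1) := by
  simp only [flipBit, Function.update_self]
  generalize x j = b
  fin_cases b <;> decide

theorem flipBit_involutive (j : V) : Function.Involutive (flipBit j) := by
  intro x
  ext i
  by_cases h : i = j
  · subst h
    simp only [flipBit, Function.update_self, add_assoc]
    generalize x i = b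
    fin_cases b <;> rfl
  · simp only [flipBit_of_ne h]

theorem neg_one_pow_natCard_flipBit [Fintype V] (ℓ : V → Fin 2) (j : V) (x : V → Fin 2) :
    (-1 : ℂ) ^ Nat.card {i // ℓ i = 1 ∧ flipBit j x i = 1} =
      (-1) ^ (ℓ j : ℕ) * (-1) ^ Nat.card {i // ℓ i = 1 ∧ x i = 1} := by
  have hxor : ∀ i, Xor (ℓ i = 1 ∧ flipBit j x i = 1) (ℓ i = 1 ∧ x i = 1) ↔ i = j ∧ ℓ j = 1 := by
    intro i
    by_cases hij : i = j
    · subst hij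
      have := xor_flipBit_self_eq_one i x
      by_cases hℓ : ℓ i = 1 <;> simp_all
    · simp [flipBit_of_ne hij, hij]
  rw [neg_one_pow_natCard_eq_xor_mul _ (fun i => ℓ i = 1 ∧ x i = 1)]
  simp only [hxor]
  generalize ℓ j = b
  fin_cases b <;> simp

end Bits

section Merge

variable {V : Type} [DecidableEq V] {P : Finset V}

theorem mergeBits_of_mem (a : {i // i ∈ P} → Fin 2) (c : {i // i ∉ P} → Fin 2)
    (i : {i // i ∈ P}) : mergeBits P a c i = a i := by
  simp [mergeBits]

theorem mergeBits_of_notMem (a : {i // i ∈ P} → Fin 2) (c : {i // i ∉ P} → Fin 2)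
    (i : {i // i ∉ P}) : mergeBits P a c i = c i := by
  simp [mergeBits, i.2]

theorem mergeBits_inj {a b : {i // i ∈ P} → Fin 2} {c d : {i // i ∉ P} → Fin 2} :
    mergeBits P a c = mergeBits P b d ↔ a = b ∧ c = d := by
  refine ⟨fun h => ⟨funext fun i => ?_, funext fun i => ?_⟩, fun h => h.1 ▸ h.2 ▸ rfl⟩
  · simpa only [mergeBits_of_mem] using congrFun h i
  · simpa only [mergeBits_of_notMem] using congrFun h i

theorem flipBit_mergeBits_of_mem {j : V} (hj : j ∈ P) (a : {i // i ∈ P} → Fin 2)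
    (c : {i // i ∉ P} → Fin 2) :
    flipBit j (mergeBits P a c) = mergeBits P (flipBit ⟨j, hj⟩ a) c := by
  ext i
  by_cases hij : i = j
  · subst hij
    simp [flipBit, mergeBits, hj]
  · have hij' : ∀ h : i ∈ P, (⟨i, h⟩ : {i // i ∈ P}) ≠ ⟨j, hj⟩ :=
      fun _ h => hij (congrArg Subtype.val h)
    by_cases hi : i ∈ P <;> simp [flipBit_of_ne, hij, hij', mergeBits, hi]

theorem flipBit_mergeBits_of_notMem {j : V} (hj : j ∉ P) (a : {i // i ∈ P} → Fin 2)
    (c : {i // i ∉ P} → Fin 2) :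
    flipBit j (mergeBits P a c) = mergeBits P a (flipBit ⟨j, hj⟩ c) := by
  ext i
  by_cases hij : i = j
  · subst hij
    simp [flipBit, mergeBits, hj]
  · have hij' : ∀ h : i ∉ P, (⟨i, h⟩ : {i // i ∉ P}) ≠ ⟨j, hj⟩ :=
      fun _ h => hij (congrArg Subtype.val h)
    by_cases hi : i ∈ P <;> simp [flipBit_of_ne, hij, hij', mergeBits, hi]

theorem pow_natCard_mergeBits [Fintype V] {M : Type*} [CommMonoid M] (r : M) (t : V → Prop)
    (a : {i // i ∈ P} → Fin 2) (c : {i // i ∉ P} → Fin 2) :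
    r ^ Nat.card {k // t k ∧ mergeBits P a c k = 1} =
      r ^ Nat.card {k : {i // i ∈ P} // t k ∧ a k = 1} *
        r ^ Nat.card {k : {i // i ∉ P} // t k ∧ c k = 1} := by
  rw [← pow_natCard_subtype_mul_pow_natCard_subtype r (· ∈ P)]
  simp only [mergeBits_of_mem, mergeBits_of_notMem]

end Merge

section Reduced

variable {V : Type} [Fintype V] [DecidableEq V] {P : Finset V}

theorem red_eq_neg_one_pow_mul_red {φ ψ : QState V}
    (n : ({i // i ∈ P} → Fin 2) → ℕ) (m : ({i // i ∉ P} → Fin 2) → ℕ)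
    (h : ∀ a c, φ (mergeBits P a c) = (-1) ^ n a * (-1) ^ m c * ψ (mergeBits P a c))
    (a b : {i // i ∈ P} → Fin 2) :
    red P φ a b = (-1) ^ n a * (-1) ^ n b * red P ψ a b := by
  simp only [red, Finset.mul_sum, h, map_mul, map_pow, map_neg, map_one]
  refine Finset.sum_congr rfl fun c _ => ?_
  have hm : ((-1 : ℂ) ^ m c) * (-1) ^ m c = 1 := by rw [← pow_add, Even.neg_one_pow ⟨_, rfl⟩]
  linear_combination ((-1) ^ n a * (-1) ^ n b * ψ (mergeBits P a c) *
    conj (ψ (mergeBits P b c))) * hm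

theorem red_comp_flipBit_of_notMem {i : V} (hi : i ∉ P) (ψ : QState V) :
    red P (fun x => ψ (flipBit i x)) = red P ψ := by
  ext a b
  simp only [red, flipBit_mergeBits_of_notMem hi]
  exact Equiv.sum_comp (flipBit_involutive _).toPerm
    fun c => ψ (mergeBits P a c) * conj (ψ (mergeBits P b c))

end Reduced

theorem encG_eq_neg_one_pow_mul {V : Type} [Fintype V] (G : SimpleGraph V) (ℓ x : V → Fin 2) :
    encG G ℓ x = (-1) ^ Nat.card {i // ℓ i = 1 ∧ x i = 1} * encG G (fun _ => 0) x := by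
  simp [encG, encSq]

section GraphState

variable {V : Type} [DecidableEq V] (G : SimpleGraph V)

theorem natCard_adj_flipBit_self (j : V) (x : V → Fin 2) :
    Nat.card {k // G.Adj j k ∧ flipBit j x k = 1} = Nat.card {k // G.Adj j k ∧ x k = 1} :=
  Nat.card_congr <| Equiv.subtypeEquivRight fun _ =>
    and_congr_right fun hk => by rw [flipBit_of_ne hk.ne']

theorem natCard_xor_edges_flipBit (j : V) (x : V → Fin 2) :
    Nat.card {e : Sym2 V // Xor (e ∈ G.edgeSet ∧ ∀ v ∈ e, flipBit j x v = 1)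
        (e ∈ G.edgeSet ∧ ∀ v ∈ e, x v = 1)} = Nat.card {k // G.Adj j k ∧ x k = 1} := by
  have hpair : ∀ k, G.Adj j k → (Xor (s(j, k) ∈ G.edgeSet ∧ ∀ v ∈ s(j, k), flipBit j x v = 1)
      (s(j, k) ∈ G.edgeSet ∧ ∀ v ∈ s(j, k), x v = 1) ↔ x k = 1) := by
    intro k hk
    have := xor_flipBit_self_eq_one j x
    simp only [SimpleGraph.mem_edgeSet, hk, true_and, Sym2.forall_mem_pair,
      flipBit_of_ne hk.ne']
    by_cases hxk : x k = 1 <;> simp_all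
  symm
  refine Nat.card_eq_of_bijective (fun k => ⟨s(j, k), (hpair k k.2.1).2 k.2.2⟩)
    ⟨fun k k' h => Subtype.ext (Sym2.congr_right.1 (congrArg Subtype.val h)), ?_⟩
  rintro ⟨e, he⟩
  have hj : j ∈ e := by
    by_contra hj
    have hiff : (∀ v ∈ e, flipBit j x v = 1) ↔ ∀ v ∈ e, x v = 1 :=
      forall₂_congr fun v hv => by rw [flipBit_of_ne (ne_of_mem_of_not_mem hv hj)]
    rw [hiff, xor_self] at he
    exact he
  obtain ⟨k, rfl⟩ := Sym2.mem_iff_exists.1 hj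
  have hk : G.Adj j k := he.or.elim (·.1) (·.1)
  exact ⟨⟨k, hk, (hpair k hk).1 he⟩, rfl⟩

theorem Kop_apply (j : V) (ψ : QState V) (x : V → Fin 2) :
    Kop G ∅ j ψ x = (-1) ^ Nat.card {k // G.Adj j k ∧ x k = 1} * ψ (flipBit j x) := by
  rw [← natCard_adj_flipBit_self, Kop, if_neg (Set.notMem_empty j)]
  rfl

theorem opEntry_Kop [Fintype V] (j : V) (x y : V → Fin 2) :
    opEntry (Kop G ∅ j) x y =
      if flipBit j x = y then (-1) ^ Nat.card {k // G.Adj j k ∧ x k = 1} else 0 := by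
  rw [opEntry, Kop_apply, basisVec]
  split_ifs <;> simp

theorem trivialOutside_Kop [Fintype V] {P : Finset V} {j : V} (hj : j ∈ P)
    (hN : ∀ k, G.Adj j k → k ∈ P) : trivialOutside P (Kop G ∅ j) := by
  have hout (c : {i // i ∉ P} → Fin 2) :
      Nat.card {k : {i // i ∉ P} // G.Adj j k ∧ c k = 1} = 0 :=
    Nat.card_eq_zero.2 (.inl ⟨fun k => k.1.2 (hN _ k.2.1)⟩)
  refine ⟨fun a b => if flipBit ⟨j, hj⟩ a = b then
    (-1) ^ Nat.card {k : {i // i ∈ P} // G.Adj j k ∧ a k = 1} else 0, fun a b c c' => ?_⟩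
  rw [opEntry_Kop, flipBit_mergeBits_of_mem hj, pow_natCard_mergeBits, hout, pow_zero, mul_one]
  by_cases hc : c = c' <;> simp [mergeBits_inj, hc]

variable [Fintype V]

theorem neg_one_pow_qVal_flipBit (j : V) (x : V → Fin 2) :
    (-1 : ℂ) ^ qVal G (flipBit j x) =
      (-1) ^ Nat.card {k // G.Adj j k ∧ x k = 1} * (-1) ^ qVal G x := by
  rw [qVal, neg_one_pow_natCard_eq_xor_mul _ (fun e => e ∈ G.edgeSet ∧ ∀ v ∈ e, x v = 1),
    natCard_xor_edges_flipBit, qVal]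

theorem encG_flipBit (ℓ : V → Fin 2) (j : V) (x : V → Fin 2) :
    encG G ℓ (flipBit j x) =
      (-1) ^ (ℓ j : ℕ) * (-1) ^ Nat.card {k // G.Adj j k ∧ x k = 1} * encG G ℓ x := by
  simp only [encG, encSq, graphState, Set.mem_empty_iff_false, false_and,
    neg_one_pow_natCard_flipBit, neg_one_pow_qVal_flipBit]
  ring

theorem Kop_encG (ℓ : V → Fin 2) (j : V) :
    Kop G ∅ j (encG G ℓ) = (-1 : ℂ) ^ (ℓ j : ℕ) • encG G ℓ := by
  ext x
  rw [Kop_apply, encG_flipBit, Pi.smul_apply, smul_eq_mul, ← mul_assoc, mul_left_comm,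
    ← pow_add, Even.neg_one_pow ⟨_, rfl⟩, mul_one]

theorem red_encG_eq (ℓ : V → Fin 2) (P : Finset V) (a b : {i // i ∈ P} → Fin 2) :
    red P (encG G ℓ) a b =
      (-1) ^ Nat.card {k : {i // i ∈ P} // ℓ k = 1 ∧ a k = 1} *
        (-1) ^ Nat.card {k : {i // i ∈ P} // ℓ k = 1 ∧ b k = 1} *
          red P (encG G fun _ => 0) a b :=
  red_eq_neg_one_pow_mul_red (φ := encG G ℓ) (ψ := encG G fun _ => 0) _
    (fun c => Nat.card {k : {i // i ∉ P} // ℓ k = 1 ∧ c k = 1})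
    (fun a c => by rw [encG_eq_neg_one_pow_mul, pow_natCard_mergeBits]) a b

theorem red_encG_eq_zero_of_odd (ℓ : V → Fin 2) {P : Finset V} {i : V} (hi : i ∉ P)
    {a b : {i // i ∈ P} → Fin 2}
    (hodd : Odd (Nat.card {k : {i // i ∈ P} // G.Adj i k ∧ a k = 1} +
      Nat.card {k : {i // i ∈ P} // G.Adj i k ∧ b k = 1})) :
    red P (encG G ℓ) a b = 0 := by
  have hflip := red_eq_neg_one_pow_mul_red (φ := fun x => encG G ℓ (flipBit i x))
    (fun a => Nat.card {k : {i // i ∈ P} // G.Adj i k ∧ a k = 1})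
    (fun c => (ℓ i : ℕ) + Nat.card {k : {i // i ∉ P} // G.Adj i k ∧ c k = 1})
    (fun a c => by
      rw [flipBit_mergeBits_of_notMem hi, ← flipBit_mergeBits_of_notMem hi, encG_flipBit,
        pow_natCard_mergeBits]
      ring) a b
  rw [red_comp_flipBit_of_notMem hi, ← pow_add, hodd.neg_one_pow] at hflip
  linear_combination hflip / 2

end GraphState

instance (n : ℕ) [NeZero n] : DecidableRel (cycG n).Adj :=
  fun a b => inferInstanceAs (Decidable (a ≠ b ∧ (b = a + 1 ∨ a = b + 1)))

theorem cycG_four_exists_odd_adj {P : Finset (Fin 4)} (hP : P.card ≤ 2)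
    {a b : {i // i ∈ P} → Fin 2}
    (hodd : Odd (Nat.card {k // a k = 1} + Nat.card {k // b k = 1})) :
    ∃ i ∉ P, Odd (Nat.card {k : {i // i ∈ P} // (cycG 4).Adj i k ∧ a k = 1} +
      Nat.card {k : {i // i ∈ P} // (cycG 4).Adj i k ∧ b k = 1}) := by
  simp only [Nat.card_eq_fintype_card] at hodd ⊢
  revert P
  decide

theorem cycG_four_exists_adj_subset {P : Finset (Fin 4)} (hP : P.card = 3) :
    ∃ j ∈ P, ∀ k, (cycG 4).Adj j k → k ∈ P := by
  revert P
  decide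

/-- (3,4) threshold scheme on the 4-cycle: with `ℓ^S = (S,S,S,S)`,
(a) any set of at most two players has reduced states independent of `S`;
(b) any set of three players contains a vertex `j` whose closed neighbourhood lies in
the set, and `K_j` acts trivially outside the set and has `|G_{ℓ^S}⟩` as an
eigenvector with eigenvalue `(−1)^S`; hence three players can determine `S` while two
obtain nothing. -/
theorem c4_34_threshold :
    (∀ P : Finset (Fin 4), P.card ≤ 2 →
      red P (encG (cycG 4) fun _ => (0 : Fin 2)) =
        red P (encG (cycG 4) fun _ => (1 : Fin 2))) ∧
    (∀ P : Finset (Fin 4), P.card = 3 →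
      ∃ j ∈ P, (∀ k, (cycG 4).Adj j k → k ∈ P) ∧
        trivialOutside P (Kop (cycG 4) ∅ j) ∧
        ∀ S : Fin 2,
          Kop (cycG 4) ∅ j (encG (cycG 4) fun _ => S) =
            ((-1 : ℂ) ^ (S : ℕ)) • encG (cycG 4) fun _ => S) := by
  refine ⟨fun P hP => ?_, fun P hP => ?_⟩
  · ext a b
    rw [red_encG_eq _ (fun _ => 1)]
    simp only [true_and]
    rcases Nat.even_or_odd (Nat.card {k // a k = 1} + Nat.card {k // b k = 1}) with heven | hodd
    · rw [← pow_add, heven.neg_one_pow, one_mul]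
    · obtain ⟨i, hi, hodd'⟩ := cycG_four_exists_odd_adj hP hodd
      rw [red_encG_eq_zero_of_odd _ _ hi hodd', mul_zero]
  · obtain ⟨j, hj, hN⟩ := cycG_four_exists_adj_subset hP
    exact ⟨j, hj, hN, trivialOutside_Kop _ hj hN, fun S => Kop_encG _ _ j⟩

end
end

section
/- Security subspace for the (3,5) CQ protocol, players {1,3,4}: let h be the graph on four qubits labelled (D,1,3,4) with edges {D,1}, {D,3}, {D,4}, {3,4}, with stabilizers k_i (no square vertices). Let W := span{|h_{(0,0,0,0)}⟩, |h_{(0,0,1,1)}⟩, |h_{(1,1,1,0)}⟩, |h_{(1,1,0,1)}⟩} (labels ordered (ℓ_D,ℓ_1,ℓ_3,ℓ_4)). Then (i) W = {ψ ∈ H_4 : (k_D∘k_1) ψ = ψ and (k_1∘k_3∘k_4) ψ = ψ}; and (ii) for every finite-dimensional complex inner-product space H_E and every unit vector Ψ ∈ H_E ⊗ H_4 lying in H_E ⊗ W, Tr_{{1,3,4}}(|Ψ⟩⟨Ψ|) = ρ_E ⊗ (Id_2/2), where ρ_E := Tr_{{D,1,3,4}}(|Ψ⟩⟨Ψ|);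 hence the environment carries no information about the dealer's qubit. -/
noncomputable section

open scoped ComplexConjugate

/-- The rank-one operator `|u⟩⟨v|` (conjugate-linear in `v`). -/
def outer {E : Type} [NormedAddCommGroup E] [InnerProductSpace ℂ E] (u v : E) : E →ₗ[ℂ] E where
  toFun w := (inner ℂ v w : ℂ) • u
  map_add' w w' := by simp [inner_add_right, add_smul]
  map_smul' c w := by simp [inner_smul_right, smul_smul]

/-- The graph on the four qubits (D,1,3,4) = (0,1,2,3) with edges
{D,1}, {D,3}, {D,4}, {3,4}. -/
def hGraph134 : SimpleGraph (Fin 4) :=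
  SimpleGraph.fromRel fun a b =>
    (a = 0 ∧ (b = 1 ∨ b = 2 ∨ b = 3)) ∨ (a = 2 ∧ b = 3)

/-- The security subspace `W`, spanned by the four encoded graph states with labels
(0,0,0,0), (0,0,1,1), (1,1,1,0), (1,1,0,1) in the order (ℓ_D, ℓ_1, ℓ_3, ℓ_4). -/
def W134 : Submodule ℂ (QState (Fin 4)) :=
  Submodule.span ℂ
    {encG hGraph134 ![0, 0, 0, 0], encG hGraph134 ![0, 0, 1, 1],
     encG hGraph134 ![1, 1, 1, 0], encG hGraph134 ![1, 1, 0, 1]}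


/-!
The sixteen encoded graph states `|h_ℓ⟩` are orthonormal, hence a basis of `H_4`, and they
diagonalise the stabilizers: `k_i |h_ℓ⟩ = (-1)^{ℓ_i} |h_ℓ⟩`. So the common `+1`-eigenspace of
`k_D k_1` and `k_1 k_3 k_4` is spanned by the `|h_ℓ⟩` with `ℓ_D + ℓ_1 = ℓ_1 + ℓ_3 + ℓ_4 = 0`,
and these are exactly the four labels spanning `W`.

For (ii), pairing the operator identity with vectors of `H_E` reduces it to the scalar identity
`∑_c f(d,c) conj (g(d',c)) = δ_{dd'}/2 · ∑_x f(x) conj (g(x))` for `f, g ∈ W`. Both sides are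
sesquilinear, so it suffices to check it on the four spanning states, where it is a finite sign
computation.
-/

open scoped Matrix

theorem linearIndependent_of_dotProduct_eq_ite {ι m R : Type*} [Fintype ι] [DecidableEq ι]
    [Fintype m] [CommRing R] {v : ι → m → R} (hv : ∀ i j, v i ⬝ᵥ v j = if i = j then 1 else 0) :
    LinearIndependent R v := by
  rw [Fintype.linearIndependent_iff]
  intro g hg j
  simpa [sum_dotProduct, smul_dotProduct, hv] using congrArg (· ⬝ᵥ v j) hg

theorem Module.Basis.apply_eq_self_iff_support_subset {ι R M : Type*} [CommRing R] [IsDomain R]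
    [AddCommGroup M] [Module R M] (b : Module.Basis ι R M) {T : M →ₗ[R] M} {μ : ι → R}
    (hT : ∀ i, T (b i) = μ i • b i) (x : M) :
    T x = x ↔ ↑(b.repr x).support ⊆ {i | μ i = 1} := by
  have repr_apply : ∀ i, b.repr (T x) i = μ i * b.repr x i := fun i =>
    LinearMap.congr_fun (b.ext (f₁ := b.coord i ∘ₗ T) (f₂ := μ i • b.coord i) fun j => by
      by_cases hij : j = i <;> simp [hT, hij]) x
  simp only [b.ext_elem_iff, repr_apply, mul_left_eq_self₀, Set.subset_def, Finset.mem_coe,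
    Finsupp.mem_support_iff, Set.mem_ofPred_eq, or_iff_not_imp_right]

theorem sum_mul_star_eq_of_mem_span {X Y R : Type*} [Fintype X] [Fintype Y] [CommRing R]
    [StarRing R] {s : Set (X → R)} (p p' : Y → X) (c : R)
    (hs : ∀ u ∈ s, ∀ w ∈ s, ∑ y, u (p y) * star (w (p' y)) = c * ∑ x, u x * star (w x))
    {f g : X → R} (hf : f ∈ Submodule.span R s) (hg : g ∈ Submodule.span R s) :
    ∑ y, f (p y) * star (g (p' y)) = c * ∑ x, f x * star (g x) := by
  induction hf, hg using Submodule.span_induction₂ with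
  | mem_mem u w hu hw => exact hs u hu w hw
  | zero_left => simp
  | zero_right => simp
  | add_left u u' w _ _ _ h h' =>
    simp only [Pi.add_apply, add_mul, Finset.sum_add_distrib, h, h', mul_add]
  | add_right u w w' _ _ _ h h' =>
    simp only [Pi.add_apply, star_add, mul_add, Finset.sum_add_distrib, h, h']
  | smul_left a u w _ _ h =>
    simp only [Pi.smul_apply, smul_eq_mul, mul_assoc, ← Finset.mul_sum, h]
    ring
  | smul_right a u w _ _ h =>
    simp only [Pi.smul_apply, smul_eq_mul, star_mul, ← mul_assoc, ← Finset.sum_mul, h]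

theorem sum_outer_eq_smul_sum_outer {X Y : Type*} [Fintype X] [Fintype Y] {E : Type}
    [NormedAddCommGroup E] [InnerProductSpace ℂ E] {V : Submodule ℂ (X → ℂ)} (p p' : Y → X)
    (c : ℂ) (hV : ∀ f ∈ V, ∀ g ∈ V, ∑ y, f (p y) * star (g (p' y)) = c * ∑ x, f x * star (g x))
    {Ψ : X → E} (hΨ : ∀ φ : E →ₗ[ℂ] ℂ, (fun x => φ (Ψ x)) ∈ V) :
    ∑ y, outer (Ψ (p y)) (Ψ (p' y)) = c • ∑ x, outer (Ψ x) (Ψ x) := by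
  ext w
  refine ext_inner_left ℂ fun a => ?_
  have key := hV _ (hΨ (innerₛₗ ℂ a)) _ (hΨ (innerₛₗ ℂ w))
  simp only [innerₛₗ_apply_apply, ← starRingEnd_apply, inner_conj_symm] at key
  simp only [LinearMap.sum_apply, LinearMap.smul_apply, outer, LinearMap.coe_mk, AddHom.coe_mk,
    inner_sum, inner_smul_right]
  simpa only [mul_comm] using key

theorem neg_one_pow_fin_two_add {R : Type*} [Monoid R] [HasDistribNeg R] (a b : Fin 2) :
    (-1 : R) ^ ((a + b : Fin 2) : ℕ) = (-1) ^ (a : ℕ) * (-1) ^ (b : ℕ) := by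
  fin_cases a <;> fin_cases b <;> simp

theorem neg_one_pow_fin_two_eq_one_iff {R : Type*} [Ring R] [CharZero R] (a : Fin 2) :
    (-1 : R) ^ (a : ℕ) = 1 ↔ a = 0 := by
  fin_cases a <;> norm_num

theorem Kop_empty_apply {V : Type} [DecidableEq V] (G : SimpleGraph V) (i : V) (ψ : QState V)
    (x : V → Fin 2) :
    Kop G ∅ i ψ x = (-1) ^ Nat.card {j // G.Adj i j ∧ Function.update x i (x i + 1) j = 1} *
      ψ (Function.update x i (x i + 1)) := by
  simp [Kop, Xop, diagOp]

namespace HGraph134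

instance : DecidableRel hGraph134.Adj :=
  fun a b => decidable_of_iff' _ (SimpleGraph.fromRel_adj _ a b)

/-- The sign `(-1)^{ℓ·x + q_h(x)}` of the amplitude `⟨x|h_ℓ⟩`. -/
def encSign (ℓ x : Fin 4 → Fin 2) : ℤ :=
  (-1) ^ (Fintype.card {i // ℓ i = 1 ∧ x i = 1} +
    Fintype.card {e : Sym2 (Fin 4) // e ∈ hGraph134.edgeSet ∧ ∀ v ∈ e, x v = 1})

theorem encG_apply (ℓ x : Fin 4 → Fin 2) : encG hGraph134 ℓ x = encSign ℓ x / 4 := by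
  have sqrt_two_inv_pow : ((Real.sqrt 2)⁻¹ ^ Fintype.card (Fin 4) : ℝ) = 1 / 4 := by
    rw [Fintype.card_fin, inv_pow, show 4 = 2 * 2 from rfl, pow_mul,
      Real.sq_sqrt zero_le_two]
    norm_num
  simp only [encG, encSq, graphState, qVal, encSign, sqrt_two_inv_pow, Set.mem_empty_iff_false,
    false_and, Nat.card_of_isEmpty, Nat.card_eq_fintype_card]
  push_cast
  ring

theorem encSign_update (i : Fin 4) (ℓ x : Fin 4 → Fin 2) :
    (-1) ^ Fintype.card {j // hGraph134.Adj i j ∧ Function.update x i (x i + 1) j = 1} *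
      encSign ℓ (Function.update x i (x i + 1)) = (-1) ^ (ℓ i : ℕ) * encSign ℓ x := by
  revert i ℓ x
  decide +kernel

theorem Kop_encG (i : Fin 4) (ℓ : Fin 4 → Fin 2) :
    Kop hGraph134 ∅ i (encG hGraph134 ℓ) = (-1 : ℂ) ^ (ℓ i : ℕ) • encG hGraph134 ℓ := by
  funext x
  have key := congrArg (fun z : ℤ => (z : ℂ) / 4) (encSign_update i ℓ x)
  simp only [Kop_empty_apply, encG_apply, Nat.card_eq_fintype_card, Pi.smul_apply,
    smul_eq_mul]
  push_cast at key ⊢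
  linear_combination key

theorem sum_encSign_mul_encSign (ℓ ℓ' : Fin 4 → Fin 2) :
    ∑ x, encSign ℓ x * encSign ℓ' x = if ℓ = ℓ' then 16 else 0 := by
  revert ℓ ℓ'
  decide +kernel

theorem encG_dotProduct_encG (ℓ ℓ' : Fin 4 → Fin 2) :
    encG hGraph134 ℓ ⬝ᵥ encG hGraph134 ℓ' = if ℓ = ℓ' then 1 else 0 := by
  have term (x) : (encSign ℓ x : ℂ) / 4 * (encSign ℓ' x / 4) =
      ((encSign ℓ x * encSign ℓ' x : ℤ) : ℂ) / 16 := by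
    push_cast; ring
  simp only [dotProduct, encG_apply, term]
  rw [← Finset.sum_div, ← Int.cast_sum, sum_encSign_mul_encSign]
  split_ifs <;> norm_num

def encBasis : Module.Basis (Fin 4 → Fin 2) ℂ (QState (Fin 4)) :=
  basisOfLinearIndependentOfCardEqFinrank
    (linearIndependent_of_dotProduct_eq_ite encG_dotProduct_encG) (by simp)

@[simp]
theorem coe_encBasis : ⇑encBasis = encG hGraph134 :=
  coe_basisOfLinearIndependentOfCardEqFinrank _ _

def secLabels : Finset (Fin 4 → Fin 2) := {ℓ | ℓ 0 + ℓ 1 = 0 ∧ ℓ 1 + ℓ 2 + ℓ 3 = 0}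

theorem W134_eq_span_image : W134 = Submodule.span ℂ (encG hGraph134 '' secLabels) := by
  have labels : secLabels = {![0, 0, 0, 0], ![0, 0, 1, 1], ![1, 1, 1, 0], ![1, 1, 0, 1]} := by
    decide +kernel
  simp [W134, labels, Set.image_insert_eq]

theorem mem_W134_iff (ψ : QState (Fin 4)) : ψ ∈ W134 ↔
    ((Kop hGraph134 ∅ 0 ∘ₗ Kop hGraph134 ∅ 1) ψ = ψ ∧
      (Kop hGraph134 ∅ 1 ∘ₗ Kop hGraph134 ∅ 2 ∘ₗ Kop hGraph134 ∅ 3) ψ = ψ) := by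
  have eigen_A (ℓ) : (Kop hGraph134 ∅ 0 ∘ₗ Kop hGraph134 ∅ 1) (encBasis ℓ) =
      (-1 : ℂ) ^ ((ℓ 0 + ℓ 1 : Fin 2) : ℕ) • encBasis ℓ := by
    simp only [coe_encBasis, LinearMap.comp_apply, Kop_encG, map_smul, smul_smul,
      neg_one_pow_fin_two_add, mul_comm]
  have eigen_B (ℓ) : (Kop hGraph134 ∅ 1 ∘ₗ Kop hGraph134 ∅ 2 ∘ₗ Kop hGraph134 ∅ 3) (encBasis ℓ) =
      (-1 : ℂ) ^ ((ℓ 1 + ℓ 2 + ℓ 3 : Fin 2) : ℕ) • encBasis ℓ := by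
    simp only [coe_encBasis, LinearMap.comp_apply, Kop_encG, map_smul, smul_smul,
      neg_one_pow_fin_two_add]
    congr 1
    ring
  rw [W134_eq_span_image, ← coe_encBasis, encBasis.mem_span_image,
    encBasis.apply_eq_self_iff_support_subset eigen_A,
    encBasis.apply_eq_self_iff_support_subset eigen_B, ← Set.subset_inter_iff]
  simp [secLabels, Set.ofPred_and, neg_one_pow_fin_two_eq_one_iff]

def withDealer (d : Fin 2) (c : {i : Fin 4 // i ≠ 0} → Fin 2) : Fin 4 → Fin 2 :=
  fun k => if h : k = 0 then d else c ⟨k, h⟩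

theorem sum_encSign_mul_encSign_withDealer (d d' : Fin 2) :
    ∀ ℓ ∈ secLabels, ∀ ℓ' ∈ secLabels,
      ∑ c, encSign ℓ (withDealer d c) * encSign ℓ' (withDealer d' c) =
        if d = d' ∧ ℓ = ℓ' then 8 else 0 := by
  revert d d'
  decide +kernel

theorem star_encG_apply (ℓ x : Fin 4 → Fin 2) :
    star (encG hGraph134 ℓ x) = encG hGraph134 ℓ x := by
  simp [encG_apply]

theorem sum_withDealer_mul_star_eq {f g : QState (Fin 4)} (hf : f ∈ W134) (hg : g ∈ W134)
    (d d' : Fin 2) :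
    ∑ c, f (withDealer d c) * star (g (withDealer d' c)) =
      (if d = d' then 1 / 2 else 0) * ∑ x, f x * star (g x) := by
  rw [W134_eq_span_image] at hf hg
  refine sum_mul_star_eq_of_mem_span _ _ _ ?_ hf hg
  rintro _ ⟨ℓ, hℓ, rfl⟩ _ ⟨ℓ', hℓ', rfl⟩
  have orthonormal : ∑ x, encG hGraph134 ℓ x * encG hGraph134 ℓ' x = if ℓ = ℓ' then 1 else 0 :=
    encG_dotProduct_encG ℓ ℓ'
  have term (x y : Fin 4 → Fin 2) : (encSign ℓ x : ℂ) / 4 * (encSign ℓ' y / 4) =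
      ((encSign ℓ x * encSign ℓ' y : ℤ) : ℂ) / 16 := by
    push_cast; ring
  simp only [star_encG_apply, orthonormal]
  simp only [encG_apply, term, ← Finset.sum_div, ← Int.cast_sum,
    sum_encSign_mul_encSign_withDealer d d' ℓ hℓ ℓ' hℓ']
  by_cases hd : d = d' <;> by_cases hl : ℓ = ℓ' <;> norm_num [hd, hl]

end HGraph134

/-- security subspace for the (3,5) CQ protocol, players {1,3,4}:
(i) `W` is exactly the common `+1`-eigenspace of `k_D∘k₁` and `k₁∘k₃∘k₄`;
(ii) every unit vector `Ψ ∈ H_E ⊗ W` (represented by its `E`-valued components;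
membership in `H_E ⊗ W` expressed via functionals on `E`) has reduced state on `E` and
the dealer qubit equal to `ρ_E ⊗ (Id₂/2)`, stated blockwise in the dealer indices;
hence the environment carries no information about the dealer's qubit. -/
theorem security_subspace_35_players134 :
    (∀ ψ : QState (Fin 4), ψ ∈ W134 ↔
      ((Kop hGraph134 ∅ 0 ∘ₗ Kop hGraph134 ∅ 1) ψ = ψ ∧
        (Kop hGraph134 ∅ 1 ∘ₗ Kop hGraph134 ∅ 2 ∘ₗ Kop hGraph134 ∅ 3) ψ = ψ)) ∧
    (∀ (E : Type) [NormedAddCommGroup E] [InnerProductSpace ℂ E]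
        [FiniteDimensional ℂ E] (Ψ : (Fin 4 → Fin 2) → E),
      (∀ φ : E →ₗ[ℂ] ℂ, (fun x => φ (Ψ x)) ∈ W134) →
      (∑ x : Fin 4 → Fin 2, ‖Ψ x‖ ^ 2) = 1 →
      ∀ d d' : Fin 2,
        (∑ c : {i : Fin 4 // i ≠ 0} → Fin 2,
            outer (Ψ fun k => if h : k = 0 then d else c ⟨k, h⟩)
                  (Ψ fun k => if h : k = 0 then d' else c ⟨k, h⟩)) =
          (if d = d' then (1 / 2 : ℂ) else 0) •
            ∑ x : Fin 4 → Fin 2, outer (Ψ x) (Ψ x)) :=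
  ⟨HGraph134.mem_W134_iff, fun _ _ _ _ _ hΨ _ d d' =>
    sum_outer_eq_smul_sum_outer _ _ _
      (fun _ hf _ hg => HGraph134.sum_withDealer_mul_star_eq hf hg d d') hΨ⟩

end
end
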